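/- arXiv:1704.02658 — 4 statements merged into one kernel-verified Lean document; each statement's English description precedes it below -/
import Mathlib

section
/- Let A ⊆ ℝ be a Borel measurable set that is symmetric, i.e., A = -A, and let Z be a standard Gaussian random variable. Then for every x ∈ ℝ, P(Z ∈ A - x) ≥ e^{-x²/2} · P(Z ∈ A), where A - x = {a - x : a ∈ A}. -/
open MeasureTheory ProbabilityTheory

lemma two_le_exp_add_exp_neg (t : ℝ) : 2 ≤ Real.exp t + Real.exp (-t) := by
  have h : Real.exp t * Real.exp (-t) = 1 := by rw [← Real.exp_add]; simp
  nlinarith [sq_nonneg (Real.exp t - 1), Real.exp_pos t, Real.exp_pos (-t)]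

lemma gauss_pdf_key (x a : ℝ) :
    2 * (Real.exp (-x ^ 2 / 2) * gaussianPDFReal 0 1 a) ≤
      gaussianPDFReal 0 1 (a - x) + gaussianPDFReal 0 1 (-a - x) := by
  simp only [gaussianPDFReal, NNReal.coe_one, mul_one, sub_zero]
  have h1 : Real.exp (-(a - x) ^ 2 / 2)
      = Real.exp (-a ^ 2 / 2) * Real.exp (-x ^ 2 / 2) * Real.exp (a * x) := by
    rw [← Real.exp_add, ← Real.exp_add]; congr 1; ring
  have h2 : Real.exp (-(-a - x) ^ 2 / 2)
      = Real.exp (-a ^ 2 / 2) * Real.exp (-x ^ 2 / 2) * Real.exp (-(a * x)) := by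
    rw [← Real.exp_add, ← Real.exp_add]; congr 1; ring
  rw [h1, h2]
  have hK : (0:ℝ) ≤ (Real.sqrt (2 * Real.pi))⁻¹ := by positivity
  have hW : (0:ℝ) ≤ (Real.sqrt (2 * Real.pi))⁻¹ *
      (Real.exp (-a ^ 2 / 2) * Real.exp (-x ^ 2 / 2)) := by positivity
  have := mul_le_mul_of_nonneg_left (two_le_exp_add_exp_neg (a * x)) hW
  nlinarith [this]

theorem gaussian_symmetric_shift (A : Set ℝ) (hA : MeasurableSet A) (hsym : A = -A) (x : ℝ) :
    ENNReal.ofReal (Real.exp (-x ^ 2 / 2)) * gaussianReal 0 1 A ≤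
      gaussianReal 0 1 ((fun a => a - x) '' A) := by
  set c : ENNReal := ENNReal.ofReal (Real.exp (-x ^ 2 / 2)) with hc
  set pdf : ℝ → ENNReal := gaussianPDF 0 1 with hpdf
  have hmpdf : Measurable pdf := measurable_gaussianPDF 0 1
  have hg1 : Measurable fun a => pdf (a - x) := hmpdf.comp (measurable_sub_const x)
  have hg2 : Measurable fun a => pdf (-a - x) :=
    hmpdf.comp ((measurable_neg.sub_const x))
  -- image set as preimage
  have himg : (fun a => a - x) '' A = (fun y => y + x) ⁻¹' A := by
    ext y
    constructor
    · rintro ⟨a, ha, rfl⟩; simpa using ha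
    · intro h; exact ⟨y + x, h, by ring⟩
  -- RHS as an integral over A
  have hRHS : gaussianReal 0 1 ((fun a => a - x) '' A)
      = ∫⁻ a, A.indicator (fun a => pdf (a - x)) a := by
    rw [himg, gaussianReal_apply _ one_ne_zero,
      ← lintegral_indicator (hA.preimage (measurable_add_const x)) _]
    have heq : ∀ y, ((fun y => y + x) ⁻¹' A).indicator pdf y
        = A.indicator (fun a => pdf (a - x)) (y + x) := by
      intro y
      by_cases h : y + x ∈ A <;>
        simp [Set.indicator_apply, Set.mem_preimage, h]
    simp_rw [← hpdf, heq]
    exact lintegral_add_right_eq_self (A.indicator fun a => pdf (a - x)) x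
  -- symmetry substitution
  have hsub : ∫⁻ a, A.indicator (fun a => pdf (a - x)) a
      = ∫⁻ a, A.indicator (fun a => pdf (-a - x)) a := by
    have hpt : ∀ a, A.indicator (fun a => pdf (-a - x)) a
        = A.indicator (fun a => pdf (a - x)) (-a) := by
      intro a
      by_cases h : a ∈ A
      · have h' : -a ∈ A := by rw [hsym]; simpa using h
        simp [Set.indicator_of_mem, h, h']
      · have h' : -a ∉ A := fun hc => h (by rw [hsym]; exact Set.mem_neg.mpr hc)
        simp [h, h']
    rw [show (fun a => A.indicator (fun a => pdf (-a - x)) a)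
        = fun a => A.indicator (fun a => pdf (a - x)) (-a) from funext hpt] at *
    have := lintegral_map_equiv (μ := (volume : Measure ℝ))
      (A.indicator fun a => pdf (a - x)) (MeasurableEquiv.neg ℝ)
    rw [show ⇑(MeasurableEquiv.neg ℝ) = (Neg.neg : ℝ → ℝ) from rfl,
      Measure.map_neg_eq_self] at this
    rw [← this]
  -- measure of A as an integral
  have hA0 : gaussianReal 0 1 A = ∫⁻ a, A.indicator pdf a := by
    rw [gaussianReal_apply _ one_ne_zero, ← lintegral_indicator hA _]
  -- pointwise inequality
  have hpoint : ∀ a, A.indicator (fun a => 2 * c * pdf a) a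
      ≤ A.indicator (fun a => pdf (a - x)) a + A.indicator (fun a => pdf (-a - x)) a := by
    intro a
    by_cases h : a ∈ A
    · simp only [Set.indicator_of_mem, h]
      have hnn : 0 ≤ gaussianPDFReal 0 1 a := gaussianPDFReal_nonneg 0 1 a
      have : (2 : ENNReal) * c * pdf a
          = ENNReal.ofReal (2 * (Real.exp (-x ^ 2 / 2) * gaussianPDFReal 0 1 a)) := by
        rw [hc, hpdf]
        rw [ENNReal.ofReal_mul (by norm_num), ENNReal.ofReal_mul (Real.exp_pos _).le]
        simp [gaussianPDF, mul_assoc]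
      rw [this, hpdf]
      simp only [gaussianPDF]
      rw [← ENNReal.ofReal_add (gaussianPDFReal_nonneg 0 1 _) (gaussianPDFReal_nonneg 0 1 _)]
      exact ENNReal.ofReal_le_ofReal (gauss_pdf_key x a)
    · simp [h]
  -- main estimate with factor 2
  have hmain : 2 * (c * gaussianReal 0 1 A) ≤ 2 * gaussianReal 0 1 ((fun a => a - x) '' A) := by
    have hL : 2 * (c * gaussianReal 0 1 A) = ∫⁻ a, A.indicator (fun a => 2 * c * pdf a) a := by
      rw [hA0, ← mul_assoc, ← lintegral_const_mul _ (hmpdf.indicator hA)]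
      congr 1
      funext a
      by_cases h : a ∈ A <;> simp [Set.indicator_apply, h]
    have hR : 2 * gaussianReal 0 1 ((fun a => a - x) '' A)
        = ∫⁻ a, (A.indicator (fun a => pdf (a - x)) a + A.indicator (fun a => pdf (-a - x)) a) := by
      rw [lintegral_add_left (hg1.indicator hA)]
      rw [hRHS, ← hsub]; ring
    rw [hL, hR]
    exact lintegral_mono hpoint
  have h2 : (2 : ENNReal) ≠ 0 := by norm_num
  have h2' : (2 : ENNReal) ≠ ⊤ := by norm_num
  exact (ENNReal.mul_le_mul_iff_right h2 h2').mp hmain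
end

section
/- Let f : ℝ → ℝ be a bounded nonnegative measurable function and Q a finite signed measure on ℝ. Then |∫_ℝ f dQ| ≤ ‖f‖_∞ · sup_{t ≥ 0} |Q({x : f(x) ≥ t})|. -/
open MeasureTheory

theorem signed_measure_layer_cake_bound (f : ℝ → ℝ) (Q : MeasureTheory.SignedMeasure ℝ)
    (hf : Measurable f) (hnonneg : ∀ x, 0 ≤ f x) (hbdd : BddAbove (Set.range f)) :
    |(∫ x, f x ∂Q.toJordanDecomposition.posPart) -
        (∫ x, f x ∂Q.toJordanDecomposition.negPart)| ≤
      (⨆ x, f x) * ⨆ t : {t : ℝ // 0 ≤ t}, |Q {x | (t : ℝ) ≤ f x}| := by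
  set μp := Q.toJordanDecomposition.posPart with hμp
  set μn := Q.toJordanDecomposition.negPart with hμn
  set M := ⨆ x, f x with hMdef
  have hfM : ∀ x, f x ≤ M := fun x => le_ciSup hbdd x
  have hM0 : 0 ≤ M := le_trans (hnonneg 0) (hfM 0)
  -- Q on measurable sets via Jordan decomposition
  have hQ : ∀ s : Set ℝ, MeasurableSet s → Q s = (μp s).toReal - (μn s).toReal := by
    intro s hs
    conv_lhs => rw [← Q.toSignedMeasure_toJordanDecomposition]
    rw [JordanDecomposition.toSignedMeasure, VectorMeasure.sub_apply,
      Measure.toSignedMeasure_apply_measurable hs, Measure.toSignedMeasure_apply_measurable hs]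
    rfl
  -- integrability of f
  have hint : ∀ μ : Measure ℝ, IsFiniteMeasure μ → Integrable f μ := by
    intro μ _
    refine (integrable_const M).mono' hf.aestronglyMeasurable ?_
    exact ae_of_all _ fun x => by
      rw [Real.norm_eq_abs, abs_of_nonneg (hnonneg x)]; exact hfM x
  -- layer cake for both parts
  have hlp : ∫ x, f x ∂μp = ∫ t in Set.Ioc 0 M, (μp {a | t ≤ f a}).toReal :=
    (hint μp inferInstance).integral_eq_integral_Ioc_meas_le
      (ae_of_all _ hnonneg) (ae_of_all _ hfM)
  have hln : ∫ x, f x ∂μn = ∫ t in Set.Ioc 0 M, (μn {a | t ≤ f a}).toReal :=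
    (hint μn inferInstance).integral_eq_integral_Ioc_meas_le
      (ae_of_all _ hnonneg) (ae_of_all _ hfM)
  -- integrability of the layer functions
  have hAnti : ∀ μ : Measure ℝ, IsFiniteMeasure μ →
      Antitone (fun t => (μ {a | t ≤ f a}).toReal) := by
    intro μ _ s t hst
    exact ENNReal.toReal_mono (measure_ne_top μ _)
      (measure_mono fun a ha => le_trans hst ha)
  have hintl : ∀ μ : Measure ℝ, IsFiniteMeasure μ →
      IntegrableOn (fun t => (μ {a | t ≤ f a}).toReal) (Set.Ioc 0 M) := by
    intro μ _
    refine (integrableOn_const (C := (μ Set.univ).toReal) measure_Ioc_lt_top.ne).mono'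
      ((hAnti μ inferInstance).measurable).aestronglyMeasurable ?_
    refine ae_of_all _ fun t => ?_
    rw [Real.norm_eq_abs, abs_of_nonneg ENNReal.toReal_nonneg]
    exact ENNReal.toReal_mono (measure_ne_top μ _) (measure_mono (Set.subset_univ _))
  rw [hlp, hln, ← integral_sub (hintl μp inferInstance) (hintl μn inferInstance)]
  have hmeas : ∀ t : ℝ, MeasurableSet {a | t ≤ f a} := fun t => hf measurableSet_Ici
  have hrw : ∀ t : ℝ, (μp {a | t ≤ f a}).toReal - (μn {a | t ≤ f a}).toReal
      = Q {a | t ≤ f a} := fun t => (hQ _ (hmeas t)).symm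
  simp only [hrw]
  -- bounding by the sup
  have hbddS : BddAbove (Set.range fun t : {t : ℝ // 0 ≤ t} => |Q {x | (t : ℝ) ≤ f x}|) := by
    refine ⟨(μp Set.univ).toReal + (μn Set.univ).toReal, ?_⟩
    rintro y ⟨t, rfl⟩
    show |Q {x | (t : ℝ) ≤ f x}| ≤ _
    rw [hQ _ (hmeas (t : ℝ))]
    refine le_trans (abs_sub _ _) (add_le_add ?_ ?_) <;>
      · rw [abs_of_nonneg ENNReal.toReal_nonneg]
        exact ENNReal.toReal_mono (measure_ne_top _ _) (measure_mono (Set.subset_univ _))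
  set S := ⨆ t : {t : ℝ // 0 ≤ t}, |Q {x | (t : ℝ) ≤ f x}| with hSdef
  have hS : ∀ t : ℝ, 0 ≤ t → |Q {x | t ≤ f x}| ≤ S := fun t ht =>
    le_ciSup hbddS ⟨t, ht⟩
  calc |∫ t in Set.Ioc 0 M, Q {a | t ≤ f a}|
      ≤ S * (volume (Set.Ioc (0:ℝ) M)).toReal := by
        rw [← Real.norm_eq_abs]
        have hmeasQ : Measurable fun t : ℝ => (Q {a | t ≤ f a} : ℝ) := by
          have he : (fun t : ℝ => (Q {a | t ≤ f a} : ℝ))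
              = fun t => (μp {a | t ≤ f a}).toReal - (μn {a | t ≤ f a}).toReal :=
            funext fun t => hQ _ (hmeas t)
          rw [he]
          exact ((hAnti μp inferInstance).measurable).sub ((hAnti μn inferInstance).measurable)
        exact norm_setIntegral_le_of_norm_le_const measure_Ioc_lt_top
          (fun t ht => by simpa [Real.norm_eq_abs] using hS t (le_of_lt ht.1))
    _ = M * S := by
        rw [Real.volume_Ioc, sub_zero, ENNReal.toReal_ofReal hM0, mul_comm]
end

section
/- Let f : ℝ → ℝ be a bounded nondecreasing measurable function, and let P and G be two probability measures on ℝ with cumulative distribution functions F_P and F_G. Then |∫ f dP - ∫ f dG| ≤ 2‖f‖_∞ · sup_{t ∈ ℝ} |F_P(t) - F_G(t)|. -/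
open MeasureTheory Set

section Aux

variable (P G : Measure ℝ) [IsProbabilityMeasure P] [IsProbabilityMeasure G]

lemma kolm_bdd : BddAbove (Set.range fun t : ℝ =>
    |(P (Set.Iic t)).toReal - (G (Set.Iic t)).toReal|) := by
  refine ⟨2, fun x hx => ?_⟩
  obtain ⟨t, rfl⟩ := hx
  have h1 : (P (Set.Iic t)).toReal ≤ 1 := by
    simpa using ENNReal.toReal_mono ENNReal.one_ne_top prob_le_one
  have h2 : (G (Set.Iic t)).toReal ≤ 1 := by
    simpa using ENNReal.toReal_mono ENNReal.one_ne_top prob_le_one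
  have h3 : 0 ≤ (P (Set.Iic t)).toReal := ENNReal.toReal_nonneg
  have h4 : 0 ≤ (G (Set.Iic t)).toReal := ENNReal.toReal_nonneg
  rw [abs_le]; constructor <;> linarith

lemma le_kolm (t : ℝ) : |(P (Set.Iic t)).toReal - (G (Set.Iic t)).toReal| ≤
    ⨆ t : ℝ, |(P (Set.Iic t)).toReal - (G (Set.Iic t)).toReal| :=
  le_ciSup (kolm_bdd P G) t

lemma kolm_nonneg : 0 ≤ ⨆ t : ℝ, |(P (Set.Iic t)).toReal - (G (Set.Iic t)).toReal| :=
  le_trans (abs_nonneg _) (le_kolm P G 0)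

lemma kolm_Iio (a : ℝ) : |(P (Set.Iio a)).toReal - (G (Set.Iio a)).toReal| ≤
    ⨆ t : ℝ, |(P (Set.Iic t)).toReal - (G (Set.Iic t)).toReal| := by
  set s : ℕ → Set ℝ := fun n => Set.Iic (a - ((n : ℝ) + 1)⁻¹) with hs
  have hmono : Monotone s := by
    intro m n hmn
    apply Iic_subset_Iic.mpr
    have : ((n : ℝ) + 1)⁻¹ ≤ ((m : ℝ) + 1)⁻¹ := by
      apply inv_anti₀ (by positivity)
      exact_mod_cast by omega
    linarith
  have hU : (⋃ n, s n) = Set.Iio a := by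
    apply subset_antisymm
    · refine Set.iUnion_subset fun n x hx => ?_
      simp only [hs, Set.mem_Iic] at hx
      have : (0:ℝ) < ((n : ℝ) + 1)⁻¹ := by positivity
      simp only [Set.mem_Iio]; linarith
    · intro x hx
      simp only [Set.mem_Iio] at hx
      obtain ⟨n, hn⟩ := exists_nat_one_div_lt (show (0:ℝ) < a - x by linarith)
      refine Set.mem_iUnion.mpr ⟨n, ?_⟩
      simp only [hs, Set.mem_Iic]
      rw [one_div] at hn
      linarith
  have tP : Filter.Tendsto (fun n => (P (s n)).toReal) Filter.atTop
      (nhds (P (Set.Iio a)).toReal) := by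
    have := tendsto_measure_iUnion_atTop (μ := P) hmono
    rw [hU] at this
    exact (ENNReal.tendsto_toReal (measure_ne_top P _)).comp this
  have tG : Filter.Tendsto (fun n => (G (s n)).toReal) Filter.atTop
      (nhds (G (Set.Iio a)).toReal) := by
    have := tendsto_measure_iUnion_atTop (μ := G) hmono
    rw [hU] at this
    exact (ENNReal.tendsto_toReal (measure_ne_top G _)).comp this
  have tabs : Filter.Tendsto (fun n => |(P (s n)).toReal - (G (s n)).toReal|)
      Filter.atTop (nhds |(P (Set.Iio a)).toReal - (G (Set.Iio a)).toReal|) :=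
    (tP.sub tG).abs
  exact le_of_tendsto' tabs fun n => le_kolm P G _

lemma kolm_upperSet (S : Set ℝ) (hS : IsUpperSet S) (hSm : MeasurableSet S) :
    |(P S).toReal - (G S).toReal| ≤
    ⨆ t : ℝ, |(P (Set.Iic t)).toReal - (G (Set.Iic t)).toReal| := by
  rcases Set.eq_empty_or_nonempty S with rfl | ⟨x0, hx0⟩
  · simpa using kolm_nonneg P G
  by_cases hbdd : BddBelow S
  · set a := sInf S with ha
    have h2 : S ⊆ Set.Ici a := fun y hy => csInf_le hbdd hy
    by_cases haS : a ∈ S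
    · have hSeq : S = Set.Ici a := subset_antisymm h2 (fun y hy => hS hy haS)
      have hcompl : Set.Ici a = (Set.Iio a)ᶜ := by simp [Set.compl_Iio]
      have keyP : (P (Set.Ici a)).toReal = 1 - (P (Set.Iio a)).toReal := by
        rw [hcompl, prob_compl_eq_one_sub measurableSet_Iio,
          ENNReal.toReal_sub_of_le prob_le_one ENNReal.one_ne_top, ENNReal.toReal_one]
      have keyG : (G (Set.Ici a)).toReal = 1 - (G (Set.Iio a)).toReal := by
        rw [hcompl, prob_compl_eq_one_sub measurableSet_Iio,
          ENNReal.toReal_sub_of_le prob_le_one ENNReal.one_ne_top, ENNReal.toReal_one]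
      rw [hSeq, keyP, keyG]
      have : (1 - (P (Set.Iio a)).toReal) - (1 - (G (Set.Iio a)).toReal) =
          -((P (Set.Iio a)).toReal - (G (Set.Iio a)).toReal) := by ring
      rw [this, abs_neg]
      exact kolm_Iio P G a
    · have hSeq : S = Set.Ioi a := by
        apply subset_antisymm
        · intro y hy
          exact lt_of_le_of_ne (Set.mem_Ici.mp (h2 hy)) (fun h => haS (h ▸ hy))
        · intro y hy
          obtain ⟨z, hzS, hz⟩ := (csInf_lt_iff hbdd ⟨x0, hx0⟩).mp hy
          exact hS hz.le hzS
      have hcompl : Set.Ioi a = (Set.Iic a)ᶜ := by simp [Set.compl_Iic]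
      have keyP : (P (Set.Ioi a)).toReal = 1 - (P (Set.Iic a)).toReal := by
        rw [hcompl, prob_compl_eq_one_sub measurableSet_Iic,
          ENNReal.toReal_sub_of_le prob_le_one ENNReal.one_ne_top, ENNReal.toReal_one]
      have keyG : (G (Set.Ioi a)).toReal = 1 - (G (Set.Iic a)).toReal := by
        rw [hcompl, prob_compl_eq_one_sub measurableSet_Iic,
          ENNReal.toReal_sub_of_le prob_le_one ENNReal.one_ne_top, ENNReal.toReal_one]
      rw [hSeq, keyP, keyG]
      have : (1 - (P (Set.Iic a)).toReal) - (1 - (G (Set.Iic a)).toReal) =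
          -((P (Set.Iic a)).toReal - (G (Set.Iic a)).toReal) := by ring
      rw [this, abs_neg]
      exact le_kolm P G a
  · have hSeq : S = Set.univ := by
      apply Set.eq_univ_of_forall
      intro y
      obtain ⟨z, hzS, hz⟩ := not_bddBelow_iff.mp hbdd y
      exact hS hz.le hzS
    rw [hSeq]
    simpa [measure_univ] using kolm_nonneg P G

end Aux

theorem monotone_integral_kolmogorov_bound (f : ℝ → ℝ)
    (hf : Measurable f) (hmono : Monotone f) (hbdd : ∃ C, ∀ x, |f x| ≤ C)
    (P G : Measure ℝ) [IsProbabilityMeasure P] [IsProbabilityMeasure G] :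
    |(∫ x, f x ∂P) - ∫ x, f x ∂G| ≤
      2 * (⨆ x, |f x|) *
        ⨆ t : ℝ, |(P (Set.Iic t)).toReal - (G (Set.Iic t)).toReal| := by
  obtain ⟨C, hC⟩ := hbdd
  set M : ℝ := ⨆ x, |f x| with hMdef
  set K : ℝ := ⨆ t : ℝ, |(P (Set.Iic t)).toReal - (G (Set.Iic t)).toReal| with hKdef
  have hMb : BddAbove (Set.range fun x => |f x|) := ⟨C, fun y hy => by
    obtain ⟨x, rfl⟩ := hy; exact hC x⟩
  have hM : ∀ x, |f x| ≤ M := fun x => le_ciSup hMb x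
  have hM0 : 0 ≤ M := le_trans (abs_nonneg _) (hM 0)
  have hK0 : 0 ≤ K := kolm_nonneg P G
  -- integrability of f
  have hintf : ∀ (μ : Measure ℝ), IsProbabilityMeasure μ → Integrable f μ := by
    intro μ hμ
    exact Integrable.mono' (integrable_const M) hf.aestronglyMeasurable
      (Filter.Eventually.of_forall fun x => by simpa using hM x)
  set g : ℝ → ℝ := fun x => f x + M with hgdef
  have hgnn : ∀ x, 0 ≤ g x := by
    intro x
    have := neg_abs_le (f x)
    have := hM x
    simp only [hgdef]; linarith [abs_nonneg (f x), neg_le_of_abs_le (hM x)]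
  have hgle : ∀ x, g x ≤ 2 * M := by
    intro x
    have h1 : f x ≤ |f x| := le_abs_self _
    have := hM x
    simp only [hgdef]; linarith
  have hintg : ∀ (μ : Measure ℝ), IsProbabilityMeasure μ → Integrable g μ := by
    intro μ hμ
    exact (hintf μ hμ).add (integrable_const M)
  have hgint : ∀ (μ : Measure ℝ) (hμ : IsProbabilityMeasure μ),
      ∫ x, g x ∂μ = (∫ x, f x ∂μ) + M := by
    intro μ hμ
    rw [integral_add (hintf μ hμ) (integrable_const M), integral_const]
    simp
  -- layer cake
  have hlc : ∀ (μ : Measure ℝ) (hμ : IsProbabilityMeasure μ),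
      ∫ x, g x ∂μ = ∫ t in Set.Ioc 0 (2 * M), (μ {a : ℝ | t ≤ g a}).toReal := by
    intro μ hμ
    exact (hintg μ hμ).integral_eq_integral_Ioc_meas_le
      (Filter.Eventually.of_forall hgnn) (Filter.Eventually.of_forall hgle)
  set hPf : ℝ → ℝ := fun t => (P {a : ℝ | t ≤ g a}).toReal with hPfdef
  set hGf : ℝ → ℝ := fun t => (G {a : ℝ | t ≤ g a}).toReal with hGfdef
  have hset : ∀ t : ℝ, {a : ℝ | t ≤ g a} = f ⁻¹' Set.Ici (t - M) := by
    intro t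
    ext a
    simp only [hgdef, Set.mem_setOf_eq, Set.mem_preimage, Set.mem_Ici]
    constructor <;> intro h <;> linarith
  have hupper : ∀ t : ℝ, IsUpperSet {a : ℝ | t ≤ g a} := by
    intro t x y hxy hx
    simp only [Set.mem_setOf_eq, hgdef] at hx ⊢
    have := hmono hxy
    linarith
  have hmeas : ∀ t : ℝ, MeasurableSet {a : ℝ | t ≤ g a} := by
    intro t
    rw [hset t]
    exact hf measurableSet_Ici
  have hptwise : ∀ t : ℝ, |hPf t - hGf t| ≤ K :=
    fun t => kolm_upperSet P G _ (hupper t) (hmeas t)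
  -- measurability and integrability of hPf, hGf
  have hanti : ∀ (μ : Measure ℝ), IsProbabilityMeasure μ →
      Antitone (fun t => (μ {a : ℝ | t ≤ g a}).toReal) := by
    intro μ hμ s t hst
    exact ENNReal.toReal_mono (measure_ne_top μ _)
      (measure_mono fun a ha => le_trans hst ha)
  have hvol : volume (Set.Ioc (0:ℝ) (2 * M)) < ⊤ := measure_Ioc_lt_top
  have hintOn : ∀ (μ : Measure ℝ) (hμ : IsProbabilityMeasure μ),
      IntegrableOn (fun t => (μ {a : ℝ | t ≤ g a}).toReal) (Set.Ioc 0 (2 * M)) volume := by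
    intro μ hμ
    refine Integrable.mono'
      ((integrableOn_const hvol.ne) : IntegrableOn (fun _ => (1:ℝ)) _ _)
      ((hanti μ hμ).measurable.aestronglyMeasurable) ?_
    refine Filter.Eventually.of_forall fun t => ?_
    have h1 : (μ {a : ℝ | t ≤ g a}).toReal ≤ 1 := by
      simpa using ENNReal.toReal_mono ENNReal.one_ne_top prob_le_one
    simpa [Real.norm_eq_abs, abs_of_nonneg ENNReal.toReal_nonneg] using h1
  have hPint : IntegrableOn hPf (Set.Ioc 0 (2 * M)) volume := hintOn P inferInstance
  have hGint : IntegrableOn hGf (Set.Ioc 0 (2 * M)) volume := hintOn G inferInstance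
  -- put everything together
  have key : (∫ x, f x ∂P) - ∫ x, f x ∂G =
      ∫ t in Set.Ioc 0 (2 * M), (hPf t - hGf t) := by
    rw [integral_sub hPint hGint]
    have e1 := hgint P inferInstance
    have e2 := hgint G inferInstance
    have e3 := hlc P inferInstance
    have e4 := hlc G inferInstance
    rw [e3] at e1
    rw [e4] at e2
    have d1 : (∫ x, f x ∂P) = (∫ t in Set.Ioc 0 (2 * M), hPf t) - M := by
      simp only [hPfdef]; linarith [e1]
    have d2 : (∫ x, f x ∂G) = (∫ t in Set.Ioc 0 (2 * M), hGf t) - M := by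
      simp only [hGfdef]; linarith [e2]
    rw [d1, d2]
    ring
  rw [key]
  calc |∫ t in Set.Ioc 0 (2 * M), (hPf t - hGf t)|
      ≤ ∫ t in Set.Ioc 0 (2 * M), |hPf t - hGf t| := by
        simpa [Real.norm_eq_abs] using
          norm_integral_le_integral_norm (fun t => hPf t - hGf t)
            (μ := volume.restrict (Set.Ioc 0 (2 * M)))
    _ ≤ ∫ _ in Set.Ioc 0 (2 * M), K := by
        refine integral_mono ((hPint.sub hGint).abs) (integrableOn_const hvol.ne) ?_
        intro t
        exact hptwise t
    _ = (volume (Set.Ioc (0:ℝ) (2 * M))).toReal * K := by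
        rw [integral_const, measureReal_restrict_apply_univ, smul_eq_mul]; rfl
    _ = 2 * M * K := by
        rw [Real.volume_Ioc, ENNReal.toReal_ofReal (by linarith)]
        ring
end

section
/- Let ρ : ℝ → ℝ be convex, even (ρ(-x) = ρ(x)), differentiable, with bounded derivative ρ', and suppose |ρ'(x)| ≥ ‖ρ'‖_∞/2 for |x| ≥ C_ρ. Let Z ~ N(0,1), σ > 0, and define for z ≥ 0 the quantity E[ρ'(z - σZ)]. Then E[ρ'(z - σZ)] ≥ (1/2)‖ρ'‖_∞ · P(Z ∈ [(C_ρ - z)/σ, (C_ρ + z)/σ]). -/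
open MeasureTheory ProbabilityTheory
open scoped NNReal ENNReal

private lemma integral_gaussianReal_eq' (g : ℝ → ℝ) :
    ∫ w, g w ∂(gaussianReal 0 1) = ∫ w, g w * gaussianPDFReal 0 1 w := by
  rw [gaussianReal_of_var_ne_zero 0 one_ne_zero]
  have hd : gaussianPDF 0 1
      = fun x => ((Real.toNNReal (gaussianPDFReal 0 1 x) : ℝ≥0) : ℝ≥0∞) := by
    funext x; rfl
  rw [hd, integral_withDensity_eq_integral_smul
    ((measurable_gaussianPDFReal 0 1).real_toNNReal) g]
  congr 1; funext x
  rw [NNReal.smul_def, smul_eq_mul, Real.coe_toNNReal _ (gaussianPDFReal_nonneg 0 1 x), mul_comm]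

theorem expectation_deriv_lower_bound (ρ : ℝ → ℝ) (Cρ σ z : ℝ)
    (hconv : ConvexOn ℝ Set.univ ρ) (heven : ∀ x, ρ (-x) = ρ x)
    (hdiff : Differentiable ℝ ρ)
    (hbdd : BddAbove (Set.range fun x => |deriv ρ x|))
    (hC : ∀ x : ℝ, Cρ ≤ |x| → (⨆ y : ℝ, |deriv ρ y|) / 2 ≤ |deriv ρ x|)
    (hσ : 0 < σ) (hz : 0 ≤ z) :
    (∫ w, deriv ρ (z - σ * w) ∂(gaussianReal 0 1)) ≥
      (1 / 2) * (⨆ y : ℝ, |deriv ρ y|) *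
        ((gaussianReal 0 1) (Set.Icc ((Cρ - z) / σ) ((Cρ + z) / σ))).toReal := by
  set M : ℝ := ⨆ y : ℝ, |deriv ρ y| with hM
  set φ : ℝ → ℝ := gaussianPDFReal 0 1 with hφ
  set m : ℝ := z / σ with hmdef
  set c : ℝ := Cρ / σ with hcdef
  set W : ℝ → ℝ := fun u => φ (m - u) - φ (m + u) with hWdef
  have hm0 : 0 ≤ m := div_nonneg hz hσ.le
  have hσm : σ * m = z := by rw [hmdef]; field_simp [hσ.ne']
  have hσc : σ * c = Cρ := by rw [hcdef]; field_simp [hσ.ne']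
  -- basic facts about deriv ρ
  have hMle : ∀ x : ℝ, |deriv ρ x| ≤ M := fun x => le_ciSup hbdd x
  have hM0 : 0 ≤ M := (abs_nonneg _).trans (hMle 0)
  have hmono : Monotone (deriv ρ) :=
    monotoneOn_univ.mp (hconv.monotoneOn_deriv (fun x _ => hdiff x))
  have hodd : ∀ x : ℝ, deriv ρ (-x) = -deriv ρ x := by
    intro x
    have h1 : (fun x => ρ (-x)) = ρ := funext heven
    have h2 : deriv (fun x => ρ (-x)) x = -deriv ρ (-x) := deriv_comp_neg ρ x
    rw [h1] at h2
    linarith [h2]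
  have h0 : deriv ρ 0 = 0 := by have := hodd 0; rw [neg_zero] at this; linarith
  have hpos : ∀ x : ℝ, 0 ≤ x → Cρ ≤ x → M / 2 ≤ deriv ρ x := by
    intro x hx hCx
    have h1 := hC x (by rwa [abs_of_nonneg hx])
    have h2 : 0 ≤ deriv ρ x := h0 ▸ hmono hx
    rwa [abs_of_nonneg h2] at h1
  -- facts about φ and W
  have hφnonneg : ∀ x, 0 ≤ φ x := gaussianPDFReal_nonneg 0 1
  have hφint : Integrable φ := integrable_gaussianPDFReal 0 1
  have hφanti : ∀ a b : ℝ, |a| ≤ |b| → φ b ≤ φ a := by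
    intro a b h
    have hsq : a ^ 2 ≤ b ^ 2 := by
      rw [← sq_abs a, ← sq_abs b]; exact pow_le_pow_left₀ (abs_nonneg a) h 2
    simp only [hφ, gaussianPDFReal, NNReal.coe_one, mul_one, sub_zero]
    apply mul_le_mul_of_nonneg_left _ (by positivity)
    rw [Real.exp_le_exp]
    linarith
  have hφeven : ∀ x, φ (-x) = φ x := by
    intro x
    simp only [hφ, gaussianPDFReal, sub_zero, NNReal.coe_one, mul_one, neg_sq]
  have hWpos : ∀ u : ℝ, 0 ≤ u → 0 ≤ W u := by
    intro u hu
    have : |m - u| ≤ |m + u| := by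
      rw [abs_of_nonneg (by linarith : (0:ℝ) ≤ m + u), abs_le]
      constructor <;> linarith
    exact sub_nonneg.mpr (hφanti _ _ this)
  have hWneg : ∀ u : ℝ, u ≤ 0 → W u ≤ 0 := by
    intro u hu
    have : |m + u| ≤ |m - u| := by
      rw [abs_of_nonneg (by linarith : (0:ℝ) ≤ m - u), abs_le]
      constructor <;> linarith
    exact sub_nonpos.mpr (hφanti _ _ this)
  have hWint : Integrable W := (hφint.comp_sub_left m).sub (hφint.comp_add_left m)
  have hfm : AEStronglyMeasurable (fun u : ℝ => deriv ρ (σ * u)) volume :=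
    ((measurable_deriv ρ).comp (measurable_const_mul σ)).aestronglyMeasurable
  have hfbd : ∀ u : ℝ, ‖deriv ρ (σ * u)‖ ≤ M := fun u => hMle (σ * u)
  have hsign : ∀ u : ℝ, 0 ≤ deriv ρ (σ * u) * W u := by
    intro u
    rcases le_total 0 u with h | h
    · exact mul_nonneg (h0 ▸ hmono (mul_nonneg hσ.le h)) (hWpos u h)
    · have h1 : deriv ρ (σ * u) ≤ 0 := h0 ▸ hmono (mul_nonpos_of_nonneg_of_nonpos hσ.le h)
      have h2 := hWneg u h
      have := mul_nonneg (neg_nonneg.mpr h1) (neg_nonneg.mpr h2)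
      rwa [neg_mul_neg] at this
  -- step: express the expectation as a Lebesgue integral and symmetrize
  have hint1 : Integrable (fun u : ℝ => deriv ρ (σ * u) * φ (m - u)) :=
    (hφint.comp_sub_left m).bdd_mul hfm (Filter.Eventually.of_forall hfbd)
  have hint2 : Integrable (fun u : ℝ => deriv ρ (σ * u) * φ (m + u)) :=
    (hφint.comp_add_left m).bdd_mul hfm (Filter.Eventually.of_forall hfbd)
  have hintfW : Integrable (fun u : ℝ => deriv ρ (σ * u) * W u) :=
    hWint.bdd_mul hfm (Filter.Eventually.of_forall hfbd)
  have hstepA : (∫ w, deriv ρ (z - σ * w) ∂(gaussianReal 0 1))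
      = ∫ u, deriv ρ (σ * u) * φ (m - u) := by
    rw [integral_gaussianReal_eq']
    rw [← integral_sub_left_eq_self (fun u => deriv ρ (σ * u) * φ (m - u)) volume m]
    congr 1; funext w
    have e1 : σ * (m - w) = z - σ * w := by rw [mul_sub, hσm]
    have e2 : m - (m - w) = w := by ring
    rw [e1, e2]
  have hstepC : ∫ u, deriv ρ (σ * u) * φ (m + u)
      = - ∫ u, deriv ρ (σ * u) * φ (m - u) := by
    rw [← integral_neg_eq_self (fun u => deriv ρ (σ * u) * φ (m + u)) volume, ← integral_neg]
    congr 1; funext u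
    have e1 : σ * -u = -(σ * u) := by ring
    have e2 : m + -u = m - u := by ring
    rw [e1, e2, hodd]; ring
  have hsplit : ∫ u, deriv ρ (σ * u) * W u
      = 2 * ∫ u, deriv ρ (σ * u) * φ (m - u) := by
    have he : (fun u : ℝ => deriv ρ (σ * u) * W u)
        = fun u => deriv ρ (σ * u) * φ (m - u) - deriv ρ (σ * u) * φ (m + u) := by
      funext u; simp only [hWdef]; ring
    rw [he, integral_sub hint1 hint2, hstepC]; ring
  -- pointwise bound
  have hptwise : ∀ u : ℝ,
      M / 2 * (Set.Ici c).indicator W u - M / 2 * (Set.Iic (-c)).indicator W u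
        ≤ deriv ρ (σ * u) * W u := by
    intro u
    by_cases h1 : c ≤ u <;> by_cases h2 : u ≤ -c
    · rw [Set.indicator_of_mem (by exact h1), Set.indicator_of_mem (by exact h2)]
      simpa using hsign u
    · rw [Set.indicator_of_mem (by exact h1),
        Set.indicator_of_notMem (by simpa using h2)]
      have hu : 0 ≤ u := by
        rcases le_total 0 c with h | h <;> [linarith; (push_neg at h2; linarith)]
      have hCx : Cρ ≤ σ * u := by rw [← hσc]; exact mul_le_mul_of_nonneg_left h1 hσ.le
      have hf2 : M / 2 ≤ deriv ρ (σ * u) := hpos _ (mul_nonneg hσ.le hu) hCx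
      have hW := hWpos u hu
      have h5 := mul_le_mul_of_nonneg_right hf2 hW
      linarith
    · rw [Set.indicator_of_notMem (by simpa using h1),
        Set.indicator_of_mem (by exact h2)]
      have hu : u ≤ 0 := by
        push_neg at h1
        rcases le_total c 0 with h | h <;> linarith
      have hCx : Cρ ≤ σ * -u := by
        rw [← hσc]; apply mul_le_mul_of_nonneg_left _ hσ.le; linarith
      have hf2 : M / 2 ≤ deriv ρ (σ * -u) :=
        hpos _ (mul_nonneg hσ.le (by linarith)) hCx
      have hf3 : deriv ρ (σ * u) ≤ -(M / 2) := by
        have e1 : σ * -u = -(σ * u) := by ring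
        rw [e1, hodd] at hf2; linarith
      have hW := hWneg u hu
      have h5 := mul_le_mul_of_nonpos_right hf3 hW
      linarith
    · rw [Set.indicator_of_notMem (by simpa using h1),
        Set.indicator_of_notMem (by simpa using h2)]
      simpa using hsign u
  -- integrate the pointwise bound
  have hind1 : Integrable ((Set.Ici c).indicator W) := hWint.indicator measurableSet_Ici
  have hind2 : Integrable ((Set.Iic (-c)).indicator W) := hWint.indicator measurableSet_Iic
  have hmono2 : ∫ u, (M / 2 * (Set.Ici c).indicator W u
        - M / 2 * (Set.Iic (-c)).indicator W u)
      ≤ ∫ u, deriv ρ (σ * u) * W u := by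
    apply integral_mono _ hintfW hptwise
    exact ((hind1.const_mul _).sub (hind2.const_mul _))
  have hLHS : ∫ u, (M / 2 * (Set.Ici c).indicator W u
        - M / 2 * (Set.Iic (-c)).indicator W u)
      = M / 2 * (∫ u in Set.Ici c, W u) - M / 2 * (∫ u in Set.Iic (-c), W u) := by
    rw [integral_sub (hind1.const_mul _) (hind2.const_mul _), integral_const_mul,
      integral_const_mul, integral_indicator measurableSet_Ici,
      integral_indicator measurableSet_Iic]
  -- compute the set integrals
  set A : ℝ := ∫ x in Set.Iic (m - c), φ x with hA
  set B : ℝ := ∫ x in Set.Ici (c + m), φ x with hB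
  have hS1 : ∫ u in Set.Ici c, φ (m - u) = A := by
    have hpre : Set.Ici c = (fun x : ℝ => m - x) ⁻¹' Set.Iic (m - c) := by
      ext x; simp only [Set.mem_preimage, Set.mem_Iic, Set.mem_Ici]
      constructor <;> intro <;> linarith
    rw [hA, hpre]
    exact (Measure.measurePreserving_sub_left volume m).setIntegral_preimage_emb
      (MeasurableEquiv.subLeft m).measurableEmbedding φ (Set.Iic (m - c))
  have hS2 : ∫ u in Set.Ici c, φ (m + u) = B := by
    have h1 : ∫ u in Set.Ici c, φ (m + u) = ∫ u in Set.Ici c, φ (u + m) := by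
      congr 1; funext u; rw [add_comm]
    have hpre : Set.Ici c = (fun x : ℝ => x + m) ⁻¹' Set.Ici (c + m) := by
      ext x; simp only [Set.mem_preimage, Set.mem_Ici]
      constructor <;> intro <;> linarith
    rw [h1, hB, hpre]
    exact (measurePreserving_add_right volume m).setIntegral_preimage_emb
      (MeasurableEquiv.addRight m).measurableEmbedding φ (Set.Ici (c + m))
  have hS3 : ∫ u in Set.Iic (-c), φ (m - u) = B := by
    have hpre : Set.Iic (-c) = (fun x : ℝ => m - x) ⁻¹' Set.Ici (c + m) := by
      ext x; simp only [Set.mem_preimage, Set.mem_Iic, Set.mem_Ici]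
      constructor <;> intro <;> linarith
    rw [hB, hpre]
    exact (Measure.measurePreserving_sub_left volume m).setIntegral_preimage_emb
      (MeasurableEquiv.subLeft m).measurableEmbedding φ (Set.Ici (c + m))
  have hS4 : ∫ u in Set.Iic (-c), φ (m + u) = A := by
    have h1 : ∫ u in Set.Iic (-c), φ (m + u) = ∫ u in Set.Iic (-c), φ (u + m) := by
      congr 1; funext u; rw [add_comm]
    have hpre : Set.Iic (-c) = (fun x : ℝ => x + m) ⁻¹' Set.Iic (m - c) := by
      ext x; simp only [Set.mem_preimage, Set.mem_Iic]
      constructor <;> intro <;> linarith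
    rw [h1, hA, hpre]
    exact (measurePreserving_add_right volume m).setIntegral_preimage_emb
      (MeasurableEquiv.addRight m).measurableEmbedding φ (Set.Iic (m - c))
  have hWIci : ∫ u in Set.Ici c, W u = A - B := by
    rw [hWdef]
    rw [integral_sub ((hφint.comp_sub_left m).integrableOn)
      ((hφint.comp_add_left m).integrableOn), hS1, hS2]
  have hWIic : ∫ u in Set.Iic (-c), W u = B - A := by
    rw [hWdef]
    rw [integral_sub ((hφint.comp_sub_left m).integrableOn)
      ((hφint.comp_add_left m).integrableOn), hS3, hS4]
  -- identify A - B with the gaussian measure of the interval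
  have hAeq : A = ∫ x in Set.Ici (c - m), φ x := by
    have h1 : A = ∫ u in Set.Iic (m - c), φ (-u) := by
      rw [hA]; congr 1; funext u; rw [hφeven]
    have hpre : Set.Iic (m - c) = (fun x : ℝ => -x) ⁻¹' Set.Ici (c - m) := by
      ext x; simp only [Set.mem_preimage, Set.mem_Iic, Set.mem_Ici]
      constructor <;> intro <;> linarith
    rw [h1, hpre]
    exact (Measure.measurePreserving_neg volume).setIntegral_preimage_emb
      (MeasurableEquiv.neg ℝ).measurableEmbedding φ (Set.Ici (c - m))
  have hcm : c - m ≤ c + m := by linarith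
  have hABsplit : ∫ x in Set.Ici (c - m), φ x
      = (∫ x in Set.Ico (c - m) (c + m), φ x) + B := by
    rw [hB, ← setIntegral_union
      ((Set.Iio_disjoint_Ici le_rfl).mono_left Set.Ico_subset_Iio_self)
      measurableSet_Ici hφint.integrableOn hφint.integrableOn,
      Set.Ico_union_Ici_eq_Ici hcm]
  have hABfinal : A - B = ∫ x in Set.Icc (c - m) (c + m), φ x := by
    rw [hAeq, hABsplit, integral_Icc_eq_integral_Ico]; ring
  -- the gaussian measure of the interval
  have hmeas : ((gaussianReal 0 1) (Set.Icc ((Cρ - z) / σ) ((Cρ + z) / σ))).toReal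
      = ∫ x in Set.Icc (c - m) (c + m), φ x := by
    have he1 : (Cρ - z) / σ = c - m := by rw [hcdef, hmdef]; ring
    have he2 : (Cρ + z) / σ = c + m := by rw [hcdef, hmdef]; ring
    rw [he1, he2, gaussianReal_apply_eq_integral 0 one_ne_zero,
      ENNReal.toReal_ofReal (setIntegral_nonneg measurableSet_Icc (fun x _ => hφnonneg x))]
  -- put everything together
  rw [ge_iff_le, hstepA, hmeas, ← hABfinal]
  have h2E : M / 2 * (A - B) - M / 2 * (B - A) ≤ 2 * ∫ u, deriv ρ (σ * u) * φ (m - u) := by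
    rw [← hsplit, ← hWIci, ← hWIic]
    calc M / 2 * (∫ u in Set.Ici c, W u) - M / 2 * (∫ u in Set.Iic (-c), W u)
        = ∫ u, (M / 2 * (Set.Ici c).indicator W u
            - M / 2 * (Set.Iic (-c)).indicator W u) := hLHS.symm
      _ ≤ _ := hmono2
  linarith
end
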